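/- Let 1 ≤ p ≤ 2, let H be a real Hilbert space, and let α > 0. Suppose T : L_p(0,1) → H is large-scale Lipschitz, i.e. there exist A > 0 and B ≥ 0 with ‖T(f) − T(g)‖_H ≤ A·‖f − g‖_p + B for all f, g ∈ L_p(0,1), and suppose there exist constants C, t > 0 such that ‖T(f) − T(g)‖_H ≥ C·‖f − g‖_p^α whenever ‖f − g‖_p ≥ t. Then α ≤ p/2. In particular, the Hilbert space compression exponent of L_p(0,1) is at most p/2. -/

import Mathlib

/-!
By Enflo's inequality, for every map `f` from the Hamming cube `{0,1}ⁿ` into a Hilbert space,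
the sum of the squared distances between antipodal vertices is at most the sum of the squared
lengths of the edges. On the other hand `x ↦ s · 1_{⋃ {I i | x i = 1}}`, with `I i` the `n`
intervals of length `1/n` partitioning `(0,1)`, embeds the cube into `L_p(0,1)` with
`‖F x - F y‖_p = t · d_H(x, y)^{1/p}` for `s = t n^{1/p}`. For `T ∘ F` the edges have length at
most `A t + B`, while antipodal vertices are at distance at least `C (t n^{1/p})^α`, so Enflo gives
`C² t^{2α} n^{2α/p} ≤ n (A t + B)²` for all `n`, forcing `2α/p ≤ 1`.
-/

open MeasureTheory Finset Function Filter
open scoped symmDiff ENNReal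

section ShiftEnergy

variable {E : Type*} [SeminormedAddCommGroup E] {G : Type*} [AddCommGroup G] [Fintype G]

def shiftEnergy (f : G → E) (g : G) : ℝ := ∑ x, ‖f (x + g) - f x‖ ^ 2

theorem shiftEnergy_sub (f : G → E) (a b : G) :
    shiftEnergy f (a - b) = ∑ x, ‖f (x + a) - f (x + b)‖ ^ 2 := by
  rw [shiftEnergy, ← Equiv.sum_comp (Equiv.addRight b)]
  simp only [Equiv.coe_addRight, add_assoc, add_sub_cancel]

theorem shiftEnergy_neg (f : G → E) (a : G) : shiftEnergy f (-a) = shiftEnergy f a := by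
  rw [← zero_sub, shiftEnergy_sub]
  conv_rhs => rw [← sub_zero a, shiftEnergy_sub]
  exact sum_congr rfl fun x _ => by rw [norm_sub_rev]

theorem norm_sub_sq_add_norm_sub_sq_le [InnerProductSpace ℝ E] (a b c d : E) :
    ‖a - c‖ ^ 2 + ‖b - d‖ ^ 2 ≤ ‖a - b‖ ^ 2 + ‖b - c‖ ^ 2 + ‖c - d‖ ^ 2 + ‖d - a‖ ^ 2 := by
  have h : ‖a - b‖ ^ 2 + ‖b - c‖ ^ 2 + ‖c - d‖ ^ 2 + ‖d - a‖ ^ 2 - (‖a - c‖ ^ 2 + ‖b - d‖ ^ 2)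
      = ‖a - b + c - d‖ ^ 2 := by
    simp only [← real_inner_self_eq_norm_sq, inner_sub_left, inner_sub_right, inner_add_left,
      inner_add_right, real_inner_comm]
    ring
  nlinarith [sq_nonneg ‖a - b + c - d‖]

-- Sum the quadrilateral inequality over the quadrilaterals `x, x + u, x + u + w, x + w`;
-- its second diagonal is a shift by `u - w = u + w`.
theorem shiftEnergy_add_le [InnerProductSpace ℝ E] (f : G → E) (u : G) {w : G} (hw : w + w = 0) :
    shiftEnergy f (u + w) ≤ shiftEnergy f u + shiftEnergy f w := by
  have hsub : u - w = u + w := by rw [sub_eq_add_neg, neg_eq_of_add_eq_zero_left hw]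
  have quad : ∀ x, ‖f (x + (u + w)) - f (x + 0)‖ ^ 2 + ‖f (x + u) - f (x + w)‖ ^ 2 ≤
      ‖f (x + (u + w)) - f (x + u)‖ ^ 2 + ‖f (x + u) - f (x + 0)‖ ^ 2 +
        ‖f (x + 0) - f (x + w)‖ ^ 2 + ‖f (x + w) - f (x + (u + w))‖ ^ 2 :=
    fun x => norm_sub_sq_add_norm_sub_sq_le _ _ _ _
  have hsum := sum_le_sum fun x (_ : x ∈ univ) => quad x
  simp only [sum_add_distrib, ← shiftEnergy_sub, sub_zero, hsub, zero_sub, shiftEnergy_neg,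
    add_sub_cancel_left, sub_add_cancel_right] at hsum
  linarith

-- Enflo's inequality.
theorem shiftEnergy_sum_le [InnerProductSpace ℝ E] {ι : Type*} (f : G → E) (v : ι → G)
    {s : Finset ι} (hv : ∀ i ∈ s, v i + v i = 0) :
    shiftEnergy f (∑ i ∈ s, v i) ≤ ∑ i ∈ s, shiftEnergy f (v i) :=
  le_sum_of_subadditive_on_pred (shiftEnergy f) (fun g => g + g = 0)
    (by simp [shiftEnergy]) (fun a _ _ hb => shiftEnergy_add_le f a hb)
    (fun _ _ ha hb => by rw [add_add_add_comm, ha, hb, add_zero]) v hv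

end ShiftEnergy

section HammingCube

variable {ι : Type*} [Fintype ι]

theorem hammingDist_add_one_self (x : ι → ZMod 2) : hammingDist (x + 1) x = Fintype.card ι := by
  simp [hammingDist]

theorem hammingDist_add_single_self [DecidableEq ι] (x : ι → ZMod 2) (i : ι) :
    hammingDist (x + Pi.single i 1) x = 1 := by
  simp [hammingDist, Pi.single_apply, filter_eq']

theorem sq_le_card_mul_sq_of_hammingDist [DecidableEq ι] {E : Type*} [SeminormedAddCommGroup E]
    [InnerProductSpace ℝ E] (Φ : (ι → ZMod 2) → E) {D e : ℝ} (hD : 0 ≤ D)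
    (hdiag : ∀ x y, hammingDist x y = Fintype.card ι → D ≤ ‖Φ x - Φ y‖)
    (hedge : ∀ x y, hammingDist x y = 1 → ‖Φ x - Φ y‖ ≤ e) :
    D ^ 2 ≤ Fintype.card ι * e ^ 2 := by
  have enflo := shiftEnergy_sum_le Φ (fun i => Pi.single i (1 : ZMod 2)) (s := univ)
    fun i _ => by rw [← Pi.single_add]; exact Pi.single_eq_zero_iff.2 (by decide)
  rw [univ_sum_single (fun _ => (1 : ZMod 2))] at enflo
  have hlow : Fintype.card (ι → ZMod 2) * D ^ 2 ≤ shiftEnergy Φ 1 := by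
    rw [shiftEnergy, ← nsmul_eq_mul, ← card_univ, ← sum_const]
    exact sum_le_sum fun x _ =>
      pow_le_pow_left₀ hD (hdiag _ _ (hammingDist_add_one_self x)) 2
  have hup : ∀ i, shiftEnergy Φ (Pi.single i 1) ≤ Fintype.card (ι → ZMod 2) * e ^ 2 := by
    intro i
    rw [shiftEnergy, ← nsmul_eq_mul, ← card_univ, ← sum_const]
    exact sum_le_sum fun x _ =>
      pow_le_pow_left₀ (norm_nonneg _) (hedge _ _ (hammingDist_add_single_self x i)) 2
  have hcard : (0 : ℝ) < Fintype.card (ι → ZMod 2) := by exact_mod_cast Fintype.card_pos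
  have := (hlow.trans enflo).trans (sum_le_sum fun i _ => hup i)
  rw [sum_const, card_univ, nsmul_eq_mul, mul_left_comm] at this
  exact le_of_mul_le_mul_left this hcard

end HammingCube

section CubeSet

variable {X ι : Type*} {I : ι → Set X}

def cubeSet (I : ι → Set X) (x : ι → ZMod 2) : Set X := ⋃ (i) (_ : x i ≠ 0), I i

theorem measurableSet_cubeSet [MeasurableSpace X] [Countable ι] (hI : ∀ i, MeasurableSet (I i))
    (x : ι → ZMod 2) : MeasurableSet (cubeSet I x) :=
  MeasurableSet.iUnion fun i => MeasurableSet.iUnion fun _ => hI i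

theorem cubeSet_symmDiff [Fintype ι] (hI : Pairwise (Disjoint on I)) (x y : ι → ZMod 2) :
    cubeSet I x ∆ cubeSet I y = ⋃ i ∈ ({i | x i ≠ y i} : Finset ι), I i := by
  ext z
  by_cases hz : ∃ j, z ∈ I j
  · obtain ⟨j, hj⟩ := hz
    have hmem : ∀ i, z ∈ I i ↔ i = j := fun i =>
      ⟨fun hi => hI.eq (Set.not_disjoint_iff.2 ⟨z, hi, hj⟩), fun h => h ▸ hj⟩
    have key : ∀ a b : ZMod 2, (¬a = 0 ∧ b = 0 ∨ ¬b = 0 ∧ a = 0) ↔ ¬a = b := by decide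
    simpa [cubeSet, Set.mem_symmDiff, hmem] using key (x j) (y j)
  · simp [cubeSet, Set.mem_symmDiff, not_exists.1 hz]

variable [MeasurableSpace X] {μ : Measure X} {F : Type*} [NormedAddCommGroup F] {p : ℝ≥0∞}

theorem norm_indicatorConstLp_sub (hp0 : p ≠ 0) (hptop : p ≠ ∞) {s t : Set X}
    (hs : MeasurableSet s) (ht : MeasurableSet t) (hμs : μ s ≠ ∞) (hμt : μ t ≠ ∞) (c : F) :
    ‖indicatorConstLp p hs hμs c - indicatorConstLp p ht hμt c‖ =
      ‖c‖ * μ.real (s ∆ t) ^ (1 / p.toReal) := by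
  rw [← norm_indicatorConstLp hp0 hptop (hs := hs.symmDiff ht) (hμs := by finiteness),
    Lp.norm_def, Lp.norm_def,
    eLpNorm_congr_ae ((Lp.coeFn_sub _ _).trans (indicatorConstLp_coeFn.sub indicatorConstLp_coeFn)),
    eLpNorm_indicator_sub_indicator, eLpNorm_congr_ae indicatorConstLp_coeFn]

theorem norm_indicatorConstLp_cubeSet_sub [Fintype ι] [IsFiniteMeasure μ] (hp0 : p ≠ 0)
    (hptop : p ≠ ∞) (hI : Pairwise (Disjoint on I)) (hIm : ∀ i, MeasurableSet (I i)) {m : ℝ}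
    (hμI : ∀ i, μ.real (I i) = m) (c : F) (x y : ι → ZMod 2) :
    ‖indicatorConstLp p (measurableSet_cubeSet hIm x) (measure_ne_top μ _) c -
        indicatorConstLp p (measurableSet_cubeSet hIm y) (measure_ne_top μ _) c‖ =
      ‖c‖ * (hammingDist x y * m) ^ (1 / p.toReal) := by
  rw [norm_indicatorConstLp_sub hp0 hptop, cubeSet_symmDiff hI,
    measureReal_biUnion_finset (hI.set_pairwise _) fun i _ => hIm i]
  simp only [hμI, sum_const, nsmul_eq_mul, hammingDist]

end CubeSet

theorem exists_hammingDist_embedding_Lp_Ioo {p : ℝ} (hp : 0 < p) {n : ℕ} (hn : 0 < n) {t : ℝ}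
    (ht : 0 ≤ t) :
    ∃ F : (Fin n → ZMod 2) → Lp ℝ (ENNReal.ofReal p) (volume.restrict (Set.Ioo (0 : ℝ) 1)),
      ∀ x y, ‖F x - F y‖ = t * (hammingDist x y : ℝ) ^ (1 / p) := by
  have hn' : (0 : ℝ) < n := by exact_mod_cast hn
  -- The cast `((i + 1 : ℕ) : ℝ)` makes `I` match `Order.succ` in `pairwise_disjoint_on_Ioo_succ`.
  set I : Fin n → Set ℝ := fun i => Set.Ioo ((i : ℕ) / n : ℝ) (((i : ℕ) + 1 : ℕ) / n)
  have hI : Pairwise (Disjoint on I) :=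
    (Monotone.pairwise_disjoint_on_Ioo_succ (f := fun k : ℕ => (k : ℝ) / n)
      fun _ _ h => div_le_div_of_nonneg_right (by exact_mod_cast h) hn'.le).comp_of_injective
      Fin.val_injective
  have hIsub : ∀ i, I i ⊆ Set.Ioo 0 1 := fun i =>
    Set.Ioo_subset_Ioo (by positivity) (by rw [div_le_one hn']; exact_mod_cast i.isLt)
  have hμI : ∀ i, (volume.restrict (Set.Ioo (0 : ℝ) 1)).real (I i) = 1 / n := by
    intro i
    rw [measureReal_restrict_apply measurableSet_Ioo, Set.inter_eq_self_of_subset_left (hIsub i),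
      Real.volume_real_Ioo_of_le (by gcongr; exact_mod_cast Nat.le_succ _)]
    push_cast
    ring
  refine ⟨fun x => indicatorConstLp _
    (measurableSet_cubeSet (I := I) (fun _ => measurableSet_Ioo) x) (measure_ne_top _ _)
    (t * n ^ (1 / p)), fun x y => ?_⟩
  rw [norm_indicatorConstLp_cubeSet_sub (by simpa using hp) ENNReal.ofReal_ne_top hI
      (fun _ => measurableSet_Ioo) hμI,
    ENNReal.toReal_ofReal hp.le, Real.norm_of_nonneg (by positivity), mul_one_div,
    Real.div_rpow (by positivity) hn'.le, mul_assoc, mul_div_cancel₀ _ (by positivity)]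

theorem le_of_forall_natCast_rpow_le {a b c K : ℝ} (hc : 0 < c)
    (h : ∀ n : ℕ, 0 < n → c * (n : ℝ) ^ a ≤ K * (n : ℝ) ^ b) : a ≤ b := by
  by_contra! hab
  have hgrow : Tendsto (fun n : ℕ => (n : ℝ) ^ (a - b)) atTop atTop :=
    (tendsto_rpow_atTop (sub_pos.2 hab)).comp tendsto_natCast_atTop_atTop
  obtain ⟨n, hbig, hn⟩ := ((hgrow.eventually_gt_atTop (K / c)).and (eventually_gt_atTop 0)).exists
  have hn' : (0 : ℝ) < n := by exact_mod_cast hn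
  have : K * (n : ℝ) ^ b < c * (n : ℝ) ^ a := by
    rw [← sub_add_cancel a b, Real.rpow_add hn', ← mul_assoc]
    exact mul_lt_mul_of_pos_right ((div_lt_iff₀' hc).1 hbig) (by positivity)
  exact absurd (h n hn) (not_le.2 this)

theorem Lp01_compression_upper_bound_general
    (p : ℝ) (hp1 : 1 ≤ p)
    (H : Type) [NormedAddCommGroup H] [InnerProductSpace ℝ H]
    (α : ℝ)
    (T : Lp ℝ (ENNReal.ofReal p) (volume.restrict (Set.Ioo (0 : ℝ) 1)) → H)
    (A B : ℝ)
    (hT_up : ∀ f g : Lp ℝ (ENNReal.ofReal p) (volume.restrict (Set.Ioo (0 : ℝ) 1)),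
      ‖T f - T g‖ ≤ A * ‖f - g‖ + B)
    (C t : ℝ) (hC : 0 < C) (ht : 0 < t)
    (hT_low : ∀ f g : Lp ℝ (ENNReal.ofReal p) (volume.restrict (Set.Ioo (0 : ℝ) 1)),
      t ≤ ‖f - g‖ → C * ‖f - g‖ ^ α ≤ ‖T f - T g‖) :
    α ≤ p / 2 := by
  have hp : 0 < p := by linarith
  suffices 2 * α / p ≤ 1 by rw [div_le_one hp] at this; linarith
  refine le_of_forall_natCast_rpow_le (c := C ^ 2 * t ^ (2 * α)) (K := (A * t + B) ^ 2)
    (by positivity) fun n hn => ?_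
  obtain ⟨F, hF⟩ := exists_hammingDist_embedding_Lp_Ioo hp hn ht.le
  have ht_le : t ≤ t * n ^ (1 / p) :=
    le_mul_of_one_le_right ht.le (Real.one_le_rpow (by exact_mod_cast hn) (by positivity))
  have hcube := sq_le_card_mul_sq_of_hammingDist (fun x => T (F x))
    (D := C * (t * n ^ (1 / p)) ^ α) (e := A * t + B) (by positivity)
    (fun x y h => by
      have hxy : ‖F x - F y‖ = t * n ^ (1 / p) := by rw [hF, h, Fintype.card_fin]
      simpa only [hxy] using hT_low (F x) (F y) (hxy ▸ ht_le))
    (fun x y h => by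
      have hxy : ‖F x - F y‖ = t := by rw [hF, h, Nat.cast_one, Real.one_rpow, mul_one]
      simpa only [hxy] using hT_up (F x) (F y))
  calc C ^ 2 * t ^ (2 * α) * n ^ (2 * α / p) = (C * (t * n ^ (1 / p)) ^ α) ^ 2 := by
        rw [mul_pow, ← Real.rpow_mul_natCast (by positivity), Real.mul_rpow ht.le (by positivity),
          ← Real.rpow_mul (Nat.cast_nonneg n)]
        ring_nf
    _ ≤ n * (A * t + B) ^ 2 := by simpa only [Fintype.card_fin] using hcube
    _ = (A * t + B) ^ 2 * n ^ (1 : ℝ) := by rw [Real.rpow_one, mul_comm]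

/-- For `1 ≤ p ≤ 2`, a real Hilbert space `H`, and `α > 0`: if
`T : L_p(0,1) → H` is large-scale Lipschitz (`‖T f - T g‖ ≤ A·‖f-g‖_p + B`) and
satisfies `‖T f - T g‖ ≥ C·‖f-g‖_p^α` whenever `‖f-g‖_p ≥ t` (for some `C, t > 0`),
then `α ≤ p/2`. In particular the Hilbert space compression exponent of `L_p(0,1)` is
at most `p/2`. Here `L_p(0,1)` is modelled as `Lp ℝ p` of Lebesgue measure restricted
to `(0,1)`. -/
theorem Lp01_compression_upper_bound
    (p : ℝ) (hp1 : 1 ≤ p) (hp2 : p ≤ 2)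
    (H : Type) [NormedAddCommGroup H] [InnerProductSpace ℝ H] [CompleteSpace H]
    (α : ℝ) (hα : 0 < α)
    (T : Lp ℝ (ENNReal.ofReal p) (volume.restrict (Set.Ioo (0 : ℝ) 1)) → H)
    (A B : ℝ) (hA : 0 < A) (hB : 0 ≤ B)
    (hT_up : ∀ f g : Lp ℝ (ENNReal.ofReal p) (volume.restrict (Set.Ioo (0 : ℝ) 1)),
      ‖T f - T g‖ ≤ A * ‖f - g‖ + B)
    (C t : ℝ) (hC : 0 < C) (ht : 0 < t)
    (hT_low : ∀ f g : Lp ℝ (ENNReal.ofReal p) (volume.restrict (Set.Ioo (0 : ℝ) 1)),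
      t ≤ ‖f - g‖ → C * ‖f - g‖ ^ α ≤ ‖T f - T g‖) :
    α ≤ p / 2 :=
  Lp01_compression_upper_bound_general p hp1 H α T A B hT_up C t hC ht hT_low
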